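/- arXiv:2411.14021 — 2 statements merged into one kernel-verified Lean document; each statement's English description precedes it below -/
import Mathlib

section
/- Let M be a real symmetric n×n matrix, let p ≤ n, and let K > 0. Then: (a) for every real n×p matrix R satisfying RᵀR = K·I_p, trace (Rᵀ * M * R) ≤ K · (sum of the p largest eigenvalues of M, counted with multiplicity); and (b) there exists a real n×p matrix R with RᵀR = K·I_p attaining this bound with equality, namely R = √K · V, where the columns of V are p orthonormal eigenvectors of M corresponding to the p largest eigenvalues. -/
open Matrix BigOperators Finset


lemma sum_castLE_eq {n p : ℕ} (hp : p ≤ n) (f : Fin n → ℝ) :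
    ∑ k : Fin p, f (Fin.castLE hp k) = ∑ k : Fin n, if (k : ℕ) < p then f k else 0 := by
  set F : ℕ → ℝ := fun i => if h : i < n then f ⟨i, h⟩ else 0 with hF
  have h1 : ∑ k : Fin p, f (Fin.castLE hp k) = ∑ i ∈ range p, F i := by
    rw [← Fin.sum_univ_eq_sum_range]
    refine Finset.sum_congr rfl fun k _ => ?_
    simp [hF, Fin.castLE, (k.2.trans_le hp)]
  have h2 : ∑ k : Fin n, (if (k : ℕ) < p then f k else 0)
      = ∑ i ∈ range n, (if i < p then F i else 0) := by
    rw [← Fin.sum_univ_eq_sum_range]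
    refine Finset.sum_congr rfl fun k _ => ?_
    by_cases h : (k : ℕ) < p <;> simp [h, hF, k.2]
  rw [h1, h2, ← Finset.sum_filter]
  congr 1
  ext i; simp [Finset.mem_range]; omega

lemma key_ineq {n p : ℕ} (hp : p ≤ n) (K : ℝ) (hK : 0 < K) (μ : Fin n → ℝ) (hμ : Antitone μ)
    (s : Fin n → ℝ) (h0 : ∀ k, 0 ≤ s k) (h1 : ∀ k, s k ≤ K)
    (hsum : ∑ k, s k = K * p) :
    ∑ k, μ k * s k ≤ K * ∑ k : Fin p, μ (Fin.castLE hp k) := by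
  set T : Fin n → ℝ := fun k => if (k : ℕ) < p then K else 0 with hT
  have hTsum : ∑ k, T k = K * p := by
    have := sum_castLE_eq hp (fun _ => K)
    simp at this
    rw [hT, ← this]
    ring
  have hRHS : K * ∑ k : Fin p, μ (Fin.castLE hp k) = ∑ k, μ k * T k := by
    rw [sum_castLE_eq hp μ, Finset.mul_sum]
    refine Finset.sum_congr rfl fun k _ => ?_
    by_cases h : (k : ℕ) < p <;> simp [hT, h] <;> ring
  rw [hRHS]
  rcases lt_or_eq_of_le hp with hlt | heq
  · set c : ℝ := μ ⟨p, hlt⟩ with hc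
    have hterm : ∀ k : Fin n, (μ k - c) * (s k - T k) ≤ 0 := by
      intro k
      by_cases h : (k : ℕ) < p
      · have h1' : c ≤ μ k := hμ (by exact Fin.le_def.mpr (le_of_lt h))
        have : s k - T k ≤ 0 := by simp [hT, h]; linarith [h1 k]
        exact mul_nonpos_of_nonneg_of_nonpos (by linarith) this
      · have h1' : μ k ≤ c := hμ (show (⟨p, hlt⟩ : Fin n) ≤ k by
          rw [Fin.le_def]; simpa using by omega)
        have : 0 ≤ s k - T k := by simp [hT, h]; exact h0 k
        exact mul_nonpos_of_nonpos_of_nonneg (by linarith) this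
    have hsumterm : ∑ k, (μ k - c) * (s k - T k) ≤ 0 :=
      Finset.sum_nonpos fun k _ => hterm k
    have hexp : ∑ k, (μ k - c) * (s k - T k)
        = (∑ k, μ k * s k - ∑ k, μ k * T k) - c * (∑ k, s k - ∑ k, T k) := by
      have h' : ∀ k : Fin n, (μ k - c) * (s k - T k)
          = μ k * s k - μ k * T k - (c * s k - c * T k) := fun k => by ring
      rw [Finset.sum_congr rfl fun k _ => h' k, Finset.sum_sub_distrib,
        Finset.sum_sub_distrib, Finset.sum_sub_distrib, ← Finset.mul_sum, ← Finset.mul_sum]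
      ring
    rw [hexp, hsum, hTsum] at hsumterm
    linarith
  · subst heq
    have hall : ∀ k, s k = K := by
      have hz : ∑ k : Fin p, (K - s k) = 0 := by
        rw [Finset.sum_sub_distrib, hsum]
        simp [mul_comm]
      have := (Finset.sum_eq_zero_iff_of_nonneg (fun k _ => by linarith [h1 k])).mp hz
      intro k; have := this k (Finset.mem_univ k); linarith
    have hTall : ∀ k : Fin p, T k = K := fun k => by simp [hT, k.2]
    refine le_of_eq (Finset.sum_congr rfl fun k _ => ?_)
    rw [hall k, hTall k]

lemma diag_bounds {n p : ℕ} (K : ℝ) (hK : 0 < K) (N : Matrix (Fin n) (Fin p) ℝ)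
    (hN : Nᵀ * N = K • (1 : Matrix (Fin p) (Fin p) ℝ)) (k : Fin n) :
    0 ≤ (N * Nᵀ) k k ∧ (N * Nᵀ) k k ≤ K := by
  set P := N * Nᵀ with hPdef
  have hdiag : ∀ l, P l l = ∑ j, (N l j) ^ 2 := by
    intro l
    simp [hPdef, mul_apply, transpose_apply, sq]
  have h0 : 0 ≤ P k k := by
    rw [hdiag]
    exact Finset.sum_nonneg fun j _ => sq_nonneg _
  have hPsymm : Pᵀ = P := by
    rw [hPdef, transpose_mul, transpose_transpose]
  have hP2 : P * P = K • P := by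
    rw [hPdef, Matrix.mul_assoc, ← Matrix.mul_assoc Nᵀ, hN, Matrix.smul_mul,
      Matrix.one_mul, Matrix.mul_smul]
  have hentry : ∑ l, (P k l) ^ 2 = K * P k k := by
    have := congrFun (congrFun hP2 k) k
    simp [mul_apply, Matrix.smul_apply, smul_eq_mul] at this
    rw [← this]
    refine Finset.sum_congr rfl fun l _ => ?_
    have heq : P l k = P k l := by
      conv_lhs => rw [← hPsymm, transpose_apply]
    rw [heq]; ring
  have hsingle : (P k k) ^ 2 ≤ ∑ l, (P k l) ^ 2 :=
    Finset.single_le_sum (f := fun l => (P k l) ^ 2) (fun l _ => sq_nonneg _) (Finset.mem_univ k)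
  constructor
  · exact h0
  · nlinarith [hsingle, hentry, h0]

theorem trace_quadratic_le_top_eigenvalues_and_attained
    (n p : ℕ) (hp : p ≤ n) (K : ℝ) (hK : 0 < K)
    (M : Matrix (Fin n) (Fin n) ℝ) (hM : Mᵀ = M)
    (μ : Fin n → ℝ) (hμ : Antitone μ)
    (v : Fin n → (Fin n → ℝ))
    (hortho : ∀ k l, v k ⬝ᵥ v l = if k = l then (1 : ℝ) else 0)
    (heig : ∀ k, M *ᵥ v k = μ k • v k) :
    (∀ R : Matrix (Fin n) (Fin p) ℝ, Rᵀ * R = K • (1 : Matrix (Fin p) (Fin p) ℝ) →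
      (Rᵀ * M * R).trace ≤ K * ∑ k : Fin p, μ (Fin.castLE hp k)) ∧
    (∃ R : Matrix (Fin n) (Fin p) ℝ,
      (∀ i k, R i k = Real.sqrt K * v (Fin.castLE hp k) i) ∧
      Rᵀ * R = K • (1 : Matrix (Fin p) (Fin p) ℝ) ∧
      (Rᵀ * M * R).trace = K * ∑ k : Fin p, μ (Fin.castLE hp k)) := by
  have hsq : Real.sqrt K * Real.sqrt K = K := Real.mul_self_sqrt hK.le
  set V : Matrix (Fin n) (Fin n) ℝ := Matrix.of fun i k => v k i with hV
  have hVtV : Vᵀ * V = (1 : Matrix (Fin n) (Fin n) ℝ) := by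
    ext k l
    simpa [hV, mul_apply, Matrix.one_apply, dotProduct] using hortho k l
  have hVVt : V * Vᵀ = (1 : Matrix (Fin n) (Fin n) ℝ) :=
    mul_eq_one_comm.mp hVtV
  have hMV : M * V = V * Matrix.diagonal μ := by
    ext i k
    rw [Matrix.mul_diagonal]
    have h := congrFun (heig k) i
    simp only [Matrix.mulVec, dotProduct, Pi.smul_apply, smul_eq_mul] at h
    simp only [hV, mul_apply, Matrix.of_apply]
    rw [h]; ring
  have hMdecomp : M = V * Matrix.diagonal μ * Vᵀ := by
    calc M = M * (V * Vᵀ) := by rw [hVVt, Matrix.mul_one]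
    _ = M * V * Vᵀ := by rw [Matrix.mul_assoc]
    _ = V * Matrix.diagonal μ * Vᵀ := by rw [hMV]
  constructor
  · intro R hR
    set N := Vᵀ * R with hNdef
    have hNt : Nᵀ = Rᵀ * V := by
      rw [hNdef, transpose_mul, transpose_transpose]
    have hNtN : Nᵀ * N = K • (1 : Matrix (Fin p) (Fin p) ℝ) := by
      rw [hNt, hNdef]
      have : Rᵀ * V * (Vᵀ * R) = Rᵀ * (V * Vᵀ) * R := by
        rw [Matrix.mul_assoc, Matrix.mul_assoc, Matrix.mul_assoc]
      rw [this, hVVt, Matrix.mul_one, hR]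
    have htr : (Rᵀ * M * R).trace = ∑ k, μ k * (N * Nᵀ) k k := by
      have h1 : Rᵀ * M * R = Nᵀ * Matrix.diagonal μ * N := by
        rw [hMdecomp, hNt, hNdef]
        simp only [Matrix.mul_assoc]
      rw [h1, Matrix.trace_mul_comm (Nᵀ * Matrix.diagonal μ) N, ← Matrix.mul_assoc]
      simp only [Matrix.trace, Matrix.diag, Matrix.mul_diagonal]
      exact Finset.sum_congr rfl fun k _ => mul_comm _ _
    have hsum : ∑ k, (N * Nᵀ) k k = K * p := by
      have h2 : (N * Nᵀ).trace = (Nᵀ * N).trace := Matrix.trace_mul_comm N Nᵀ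
      rw [hNtN] at h2
      simp only [Matrix.trace_smul, Matrix.trace_one, smul_eq_mul] at h2
      simpa [Matrix.trace, Matrix.diag] using h2
    rw [htr]
    exact key_ineq hp K hK μ hμ (fun k => (N * Nᵀ) k k)
      (fun k => (diag_bounds K hK N hNtN k).1)
      (fun k => (diag_bounds K hK N hNtN k).2) hsum
  · refine ⟨Matrix.of fun i k => Real.sqrt K * v (Fin.castLE hp k) i,
      fun i k => rfl, ?_, ?_⟩
    · ext k l
      have h1 : (((Matrix.of fun i k => Real.sqrt K * v (Fin.castLE hp k) i)ᵀ *
          (Matrix.of fun i k => Real.sqrt K * v (Fin.castLE hp k) i)) : Matrix (Fin p) (Fin p) ℝ) k l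
          = K * (v (Fin.castLE hp k) ⬝ᵥ v (Fin.castLE hp l)) := by
        simp only [mul_apply, transpose_apply, Matrix.of_apply, dotProduct, Finset.mul_sum]
        refine Finset.sum_congr rfl fun i _ => ?_
        have : (Real.sqrt K * v (Fin.castLE hp k) i) * (Real.sqrt K * v (Fin.castLE hp l) i)
            = (Real.sqrt K * Real.sqrt K) * (v (Fin.castLE hp k) i * v (Fin.castLE hp l) i) := by
          ring
        rw [this, hsq]
      rw [h1, hortho]
      simp [Matrix.smul_apply, Matrix.one_apply, Fin.castLE_inj, mul_ite]
    · set R : Matrix (Fin n) (Fin p) ℝ :=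
        Matrix.of fun i k => Real.sqrt K * v (Fin.castLE hp k) i with hRdef
      have hMR : ∀ i k, (M * R) i k
          = Real.sqrt K * (μ (Fin.castLE hp k) * v (Fin.castLE hp k) i) := by
        intro i k
        have h := congrFun (heig (Fin.castLE hp k)) i
        simp only [Matrix.mulVec, dotProduct, Pi.smul_apply, smul_eq_mul] at h
        simp only [hRdef, mul_apply, Matrix.of_apply]
        rw [← h, Finset.mul_sum]
        exact Finset.sum_congr rfl fun i' _ => by ring
      have hdiag : ∀ k, (Rᵀ * M * R) k k = K * μ (Fin.castLE hp k) := by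
        intro k
        rw [Matrix.mul_assoc]
        have h2 : (Rᵀ * (M * R)) k k
            = ∑ i, R i k * (Real.sqrt K * (μ (Fin.castLE hp k) * v (Fin.castLE hp k) i)) := by
          rw [mul_apply]
          exact Finset.sum_congr rfl fun i _ => by rw [transpose_apply, hMR i k]
        rw [h2]
        have h3 : ∑ i, R i k * (Real.sqrt K * (μ (Fin.castLE hp k) * v (Fin.castLE hp k) i))
            = K * μ (Fin.castLE hp k) * (v (Fin.castLE hp k) ⬝ᵥ v (Fin.castLE hp k)) := by
          simp only [hRdef, Matrix.of_apply, dotProduct, Finset.mul_sum]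
          refine Finset.sum_congr rfl fun i _ => ?_
          have : (Real.sqrt K * v (Fin.castLE hp k) i)
                * (Real.sqrt K * (μ (Fin.castLE hp k) * v (Fin.castLE hp k) i))
              = (Real.sqrt K * Real.sqrt K)
                * (μ (Fin.castLE hp k) * (v (Fin.castLE hp k) i * v (Fin.castLE hp k) i)) := by
            ring
          rw [this, hsq]; ring
        rw [h3, hortho]
        simp
      simp only [Matrix.trace, Matrix.diag]
      rw [Finset.sum_congr rfl fun k _ => hdiag k, ← Finset.mul_sum]
end

section
/- Let X and Y be real n×p matrices with XᵀX = I_p and YᵀY = I_p, and let S be a real symmetric p×p matrix (Sᵀ = S). Then trace (Sᵀ * Xᵀ * (Y − X)) = −(1/2) · trace (S * (Y − X)ᵀ * (Y − X)), and consequently | trace (Sᵀ * Xᵀ * (Y − X)) | ≤ (1/2) · ‖S‖_F · ‖Y − X‖_F². -/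
open Matrix

/-- The Frobenius norm `‖A‖_F = √(trace (Aᵀ A))` of a real matrix. -/
noncomputable def frobNorm {m n : ℕ} (A : Matrix (Fin m) (Fin n) ℝ) : ℝ :=
  Real.sqrt (Aᵀ * A).trace

lemma trace_transpose_mul_self_eq {m n : ℕ} (A : Matrix (Fin m) (Fin n) ℝ) :
    (Aᵀ * A).trace = ∑ j, ∑ i, A i j ^ 2 := by
  simp [Matrix.trace, Matrix.mul_apply, Matrix.diag, sq]

lemma trace_transpose_mul_self_nonneg {m n : ℕ} (A : Matrix (Fin m) (Fin n) ℝ) :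
    0 ≤ (Aᵀ * A).trace := by
  rw [trace_transpose_mul_self_eq]
  positivity

lemma frobNorm_sq {m n : ℕ} (A : Matrix (Fin m) (Fin n) ℝ) :
    frobNorm A ^ 2 = (Aᵀ * A).trace :=
  Real.sq_sqrt (trace_transpose_mul_self_nonneg A)

lemma frobNorm_nonneg {m n : ℕ} (A : Matrix (Fin m) (Fin n) ℝ) :
    0 ≤ frobNorm A := Real.sqrt_nonneg _

lemma frobNorm_transpose {m n : ℕ} (A : Matrix (Fin m) (Fin n) ℝ) :
    frobNorm Aᵀ = frobNorm A := by
  unfold frobNorm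
  rw [trace_transpose_mul_self_eq, trace_transpose_mul_self_eq, Finset.sum_comm]
  simp

/-- Cauchy–Schwarz for the trace pairing. -/
lemma abs_trace_mul_le {p : ℕ} (S K : Matrix (Fin p) (Fin p) ℝ) :
    |(S * K).trace| ≤ frobNorm S * frobNorm K := by
  have h1 : (S * K).trace = ∑ ij : Fin p × Fin p, S ij.1 ij.2 * Kᵀ ij.1 ij.2 := by
    rw [Fintype.sum_prod_type]
    simp [Matrix.trace, Matrix.mul_apply, Matrix.diag, Matrix.transpose_apply, Finset.mul_sum]
  have h2 := Finset.sum_mul_sq_le_sq_mul_sq Finset.univ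
    (fun ij : Fin p × Fin p => S ij.1 ij.2) (fun ij : Fin p × Fin p => Kᵀ ij.1 ij.2)
  have hS : ∑ ij : Fin p × Fin p, S ij.1 ij.2 ^ 2 = (Sᵀ * S).trace := by
    rw [trace_transpose_mul_self_eq, Fintype.sum_prod_type]
    exact Finset.sum_comm
  have hK : ∑ ij : Fin p × Fin p, Kᵀ ij.1 ij.2 ^ 2 = (Kᵀ * K).trace := by
    rw [trace_transpose_mul_self_eq, Fintype.sum_prod_type]
    simp [Matrix.transpose_apply]
  calc |(S * K).trace| = Real.sqrt ((S * K).trace ^ 2) := (Real.sqrt_sq_eq_abs _).symm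
    _ ≤ Real.sqrt ((Sᵀ * S).trace * (Kᵀ * K).trace) := by
        apply Real.sqrt_le_sqrt
        rw [h1, ← hS, ← hK]
        exact h2
    _ = frobNorm S * frobNorm K := Real.sqrt_mul (trace_transpose_mul_self_nonneg S) _

lemma frobNorm_mul_le {m n q : ℕ} (A : Matrix (Fin m) (Fin n) ℝ)
    (B : Matrix (Fin n) (Fin q) ℝ) :
    frobNorm (A * B) ≤ frobNorm A * frobNorm B := by
  unfold frobNorm
  rw [← Real.sqrt_mul (trace_transpose_mul_self_nonneg A)]
  apply Real.sqrt_le_sqrt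
  rw [trace_transpose_mul_self_eq, trace_transpose_mul_self_eq, trace_transpose_mul_self_eq]
  have key : ∀ j i, (A * B) i j ^ 2 ≤ (∑ k, A i k ^ 2) * (∑ k, B k j ^ 2) := by
    intro j i
    rw [Matrix.mul_apply]
    exact Finset.sum_mul_sq_le_sq_mul_sq Finset.univ _ _
  calc ∑ j, ∑ i, (A * B) i j ^ 2
      ≤ ∑ j, ∑ i, (∑ k, A i k ^ 2) * (∑ k, B k j ^ 2) := by
        apply Finset.sum_le_sum; intro j _
        apply Finset.sum_le_sum; intro i _
        exact key j i
    _ = ∑ j, (∑ i, ∑ k, A i k ^ 2) * (∑ k, B k j ^ 2) := by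
        refine Finset.sum_congr rfl fun j _ => ?_
        rw [Finset.sum_mul]
    _ = (∑ i, ∑ k, A i k ^ 2) * ∑ j, ∑ k, B k j ^ 2 := by rw [← Finset.mul_sum]
    _ = (∑ j, ∑ i, A i j ^ 2) * ∑ j, ∑ i, B i j ^ 2 := by rw [Finset.sum_comm]

theorem symmetric_pairing_estimate_on_stiefel
    (n p : ℕ) (X Y : Matrix (Fin n) (Fin p) ℝ)
    (hX : Xᵀ * X = 1) (hY : Yᵀ * Y = 1)
    (S : Matrix (Fin p) (Fin p) ℝ) (hS : Sᵀ = S) :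
    (Sᵀ * Xᵀ * (Y - X)).trace = -(1 / 2) * (S * (Y - X)ᵀ * (Y - X)).trace ∧
    |(Sᵀ * Xᵀ * (Y - X)).trace| ≤ (1 / 2) * frobNorm S * frobNorm (Y - X) ^ 2 := by
  have htr : (S * (Yᵀ * X)).trace = (S * (Xᵀ * Y)).trace := by
    conv_lhs => rw [← Matrix.trace_transpose]
    rw [Matrix.transpose_mul, Matrix.transpose_mul, Matrix.transpose_transpose, hS,
      Matrix.trace_mul_comm]
  have h1 : (Sᵀ * Xᵀ * (Y - X)).trace = -(1 / 2) * (S * (Y - X)ᵀ * (Y - X)).trace := by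
    rw [hS]
    have expand : S * (Y - X)ᵀ * (Y - X) =
        S * (Yᵀ * Y) - S * (Yᵀ * X) - S * (Xᵀ * Y) + S * (Xᵀ * X) := by
      simp only [Matrix.transpose_sub, Matrix.mul_sub, Matrix.sub_mul, Matrix.mul_assoc]
      abel
    have expand2 : S * Xᵀ * (Y - X) = S * (Xᵀ * Y) - S * (Xᵀ * X) := by
      rw [Matrix.mul_sub, Matrix.mul_assoc, Matrix.mul_assoc]
    rw [expand, expand2, hX, hY]
    simp only [Matrix.trace_sub, Matrix.trace_add, htr]
    ring
  refine ⟨h1, ?_⟩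
  rw [h1, abs_mul]
  have h2 : |(S * (Y - X)ᵀ * (Y - X)).trace| ≤ frobNorm S * frobNorm (Y - X) ^ 2 := by
    rw [Matrix.mul_assoc]
    calc |(S * ((Y - X)ᵀ * (Y - X))).trace| ≤ frobNorm S * frobNorm ((Y - X)ᵀ * (Y - X)) :=
          abs_trace_mul_le _ _
      _ ≤ frobNorm S * (frobNorm (Y - X)ᵀ * frobNorm (Y - X)) := by
          apply mul_le_mul_of_nonneg_left (frobNorm_mul_le _ _) (frobNorm_nonneg S)
      _ = frobNorm S * frobNorm (Y - X) ^ 2 := by rw [frobNorm_transpose]; ring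
  have : |(-(1 / 2) : ℝ)| = 1 / 2 := by norm_num
  rw [this]
  calc (1 / 2 : ℝ) * |(S * (Y - X)ᵀ * (Y - X)).trace|
      ≤ 1 / 2 * (frobNorm S * frobNorm (Y - X) ^ 2) := by linarith
    _ = 1 / 2 * frobNorm S * frobNorm (Y - X) ^ 2 := by ring
end
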